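/- Let G be a concurrent game with initial state s_0 and let σ be a pure Nash equilibrium of (G, s_0) with payoff vector z (that is, player i's expected payoff is z_i for each i). Then there exists an infinite path π in the graph G(z) starting from s_0 with pay_i(π) = z_i for each player i. -/

import Mathlib

open MeasureTheory Filter

noncomputable section

instance : Fact ((0:ℝ) < 1) := ⟨one_pos⟩

/-- The source of randomness used to run strategies: a countable product of circle groups,
which is a compact group, equipped below with its normalised Haar measure.  Under this
measure the coordinates (read as reals in `[0,1)`) are i.i.d. uniform random variables. -/
abbrev USpace : Type := ℕ → AddCircle (1:ℝ)

/-- The normalised Haar (probability) measure on `USpace`. -/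
def uHaar : Measure USpace :=
  ((Measure.addHaar (G := USpace)) Set.univ)⁻¹ • Measure.addHaar

/-- The `n`-th uniform coordinate, as a real number in `[0,1)`. -/
def coordReal (u : USpace) (n : ℕ) : ℝ := ((AddCircle.equivIco 1 0) (u n) : ℝ)

/-- A concurrent game with players `P`, states `S` and actions `A` (all finite and nonempty):
each player `i` has a nonempty set `act i s` of actions available at each state `s`, there is a
transition function `tr` and a reward function `rew i` for each player. -/
structure ConcurrentGame (P S A : Type) [Fintype P] [Nonempty P] [Fintype S] [Nonempty S]
    [Fintype A] [Nonempty A] : Type where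
  act : P → S → Set A
  act_nonempty : ∀ i s, (act i s).Nonempty
  tr : S → (P → A) → S
  rew : P → S → ℝ

/-- A history (without its final state): the list of (state, action profile) pairs seen so far,
in chronological order. -/
abbrev Hist (P S A : Type) := List (S × (P → A))

variable {P S A : Type} [Fintype P] [Nonempty P] [Fintype S] [Nonempty S]
  [Fintype A] [Nonempty A] [DecidableEq P]

namespace ConcurrentGame

/-- A (randomised) strategy of player `i`: for every history `x` and current state `s`,
a probability distribution on actions, supported on the available actions `act i s`. -/
structure Strategy (G : ConcurrentGame P S A) (i : P) where
  prob : Hist P S A → S → A → ℝ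
  nonneg : ∀ x s a, 0 ≤ prob x s a
  sum_one : ∀ x s, ∑ a, prob x s a = 1
  supp : ∀ x s a, prob x s a ≠ 0 → a ∈ G.act i s

variable {G : ConcurrentGame P S A}

/-- A pure strategy: every prescribed distribution is degenerate. -/
def Strategy.IsPure {i : P} (σ : Strategy G i) : Prop := ∀ x s, ∃ a, σ.prob x s a = 1

/-- A stationary strategy: depends only on the current state. -/
def Strategy.IsStationary {i : P} (σ : Strategy G i) : Prop :=
  ∀ x y s, σ.prob x s = σ.prob y s

/-- A positional strategy: pure and stationary. -/
def Strategy.IsPositional {i : P} (σ : Strategy G i) : Prop :=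
  σ.IsPure ∧ σ.IsStationary

end ConcurrentGame

/-- A strategy profile: one strategy for each player. -/
abbrev Profile (G : ConcurrentGame P S A) := ∀ i : P, G.Strategy i

namespace ConcurrentGame

def IsPureProfile {G : ConcurrentGame P S A} (σ : Profile G) : Prop := ∀ i, (σ i).IsPure
def IsStationaryProfile {G : ConcurrentGame P S A} (σ : Profile G) : Prop :=
  ∀ i, (σ i).IsStationary
def IsPositionalProfile {G : ConcurrentGame P S A} (σ : Profile G) : Prop :=
  ∀ i, (σ i).IsPositional

variable (G : ConcurrentGame P S A)

/-- An action profile is legal at `s` if each player's action is available to her. -/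
def Legal (s : S) (a : P → A) : Prop := ∀ i, a i ∈ G.act i s

/-- A play of the game: an infinite sequence of (state, action profile) pairs such that every
action profile is legal and consecutive states are related by the transition function. -/
def IsPlay (π : ℕ → S × (P → A)) : Prop :=
  ∀ n, G.Legal (π n).1 (π n).2 ∧ (π (n + 1)).1 = G.tr (π n).1 (π n).2

/-- The limit-average (mean) payoff of player `i` along a sequence of states. -/
def payOf (i : P) (ss : ℕ → S) : ℝ :=
  Filter.liminf (fun n : ℕ => (∑ j ∈ Finset.range n, G.rew i (ss j)) / n) Filter.atTop

/-- The probability that profile `a` is played after history `(x, s)` under profile `σ`. -/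
def weight (σ : Profile G) (x : Hist P S A) (s : S) (a : P → A) : ℝ :=
  ∏ i, (σ i).prob x s (a i)

/-- cumulative distribution of `f` w.r.t. a fixed enumeration of action profiles. -/
def cum (f : (P → A) → ℝ) (k : ℕ) : ℝ :=
  ∑ b ∈ Finset.univ.filter (fun b => ((Fintype.equivFin (P → A)) b : ℕ) < k), f b

/-- Sample an action profile from the distribution `f` via inverse-cdf transform of `u ∈ [0,1)`. -/
def pick (f : (P → A) → ℝ) (u : ℝ) : P → A :=
  (Fintype.equivFin (P → A)).symm
    (if h : (Finset.univ.filter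
          (fun k : Fin (Fintype.card (P → A)) => cum (P := P) (A := A) f ((k : ℕ) + 1) ≤ u)).card
        < Fintype.card (P → A)
      then ⟨_, h⟩ else ⟨0, Fintype.card_pos⟩)

/-- The history induced from initial state `s₀` by a finite sequence of action profiles. -/
def histOf (s₀ : S) : List (P → A) → Hist P S A × S
  | [] => ([], s₀)
  | a :: l =>
    let h : Hist P S A × S := histOf (G.tr s₀ a) l
    ((s₀, a) :: h.1, h.2)

/-- The first `n` action profiles of the play run by profile `σ` from `s₀`,
driven by the source of randomness `u`. -/
def samplePrefix (σ : Profile G) (s₀ : S) (u : USpace) : ℕ → List (P → A)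
  | 0 => []
  | n + 1 =>
    let l : List (P → A) := samplePrefix σ s₀ u n
    let h : Hist P S A × S := G.histOf s₀ l
    l ++ [pick (G.weight σ h.1 h.2) (coordReal u n)]

/-- The state at time `n` of the play run by `σ` from `s₀` with randomness `u`. -/
def stateAt (σ : Profile G) (s₀ : S) (u : USpace) (n : ℕ) : S :=
  (G.histOf s₀ (G.samplePrefix σ s₀ u n)).2

/-- The expected (limit-average) payoff of player `i` under the strategy profile `σ`,
starting from `s₀`: the integral of the mean payoff over the induced measure on plays. -/
def expPay (σ : Profile G) (s₀ : S) (i : P) : ℝ :=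
  ∫ u, G.payOf i (G.stateAt σ s₀ u) ∂uHaar

/-- The probability that the play under `σ` from `s₀` ever visits the set `T` of states. -/
def probVisit (σ : Profile G) (s₀ : S) (T : Set S) : ℝ :=
  (uHaar {u | ∃ n, G.stateAt σ s₀ u n ∈ T}).toReal

/-- A Nash equilibrium: no player can increase her expected payoff by unilaterally
switching to another strategy. -/
def IsNash (σ : Profile G) (s₀ : S) : Prop :=
  ∀ (i : P) (τ : G.Strategy i),
    G.expPay (Function.update σ i τ) s₀ i ≤ G.expPay σ s₀ i

/-- `pval i s`: the least payoff the coalition of all other players can inflict on player `i`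
using pure strategy profiles, when the game starts at `s`. -/
def pval (i : P) (s : S) : ℝ :=
  ⨅ σ : {σ : Profile G // IsPureProfile σ}, ⨆ τ : G.Strategy i,
    G.expPay (Function.update σ.1 i τ) s i

/-- A state is terminal if every legal action profile leads back to it. -/
def Terminal (s : S) : Prop := ∀ a, G.Legal s a → G.tr s a = s

/-- A terminal-reward game: non-zero rewards occur only at terminal states. -/
def IsTerminalReward : Prop := ∀ (i : P) (s : S), ¬ G.Terminal s → G.rew i s = 0

/-- `a` is `z`-secure at `s`: `a` is legal at `s`, and whenever a single player `i` deviates to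
some available action `b`, the resulting state has `pval i ≤ z i`. -/
def zSecure (z : P → EReal) (s : S) (a : P → A) : Prop :=
  G.Legal s a ∧
    ∀ (i : P), ∀ b ∈ G.act i s, (G.pval i (G.tr s (Function.update a i b)) : EReal) ≤ z i

/-- The edge relation of the graph `G(z)`: an edge from `s` to `t` iff some `z`-secure action
profile at `s` leads to `t`. -/
def secureEdge (z : P → EReal) (s t : S) : Prop :=
  ∃ a, G.zSecure z s a ∧ G.tr s a = t

end ConcurrentGame

end

/-!
Since `σ` is pure, its play from `s₀` is a single deterministic sequence of states, whose mean
payoff is `z`; this sequence is the path. Each action profile along it is `z`-secure: if player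
`i` deviates to `b` at time `n` and reaches `t`, let the others continue with their
`σ`-strategies after that history. Any response `τ` of player `i` from `t`, prefixed by the
deviation, is a unilateral deviation from `σ` at `s₀` with the same expected payoff as `τ` from `t`
(the mean payoff ignores the finite prefix, and shifting the randomness source preserves its
Haar measure). So by the Nash property `pval i t ≤ z i`.
-/

open Topology

lemma liminf_add_of_tendsto_zero {ι : Type*} {l : Filter ι} [l.NeBot] {u v : ι → ℝ}
    (hu : Tendsto u l (𝓝 0)) (hv : IsBoundedUnder (· ≥ ·) l v)
    (hv' : IsCoboundedUnder (· ≥ ·) l v) :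
    liminf (u + v) l = liminf v l := by
  have hu₁ : IsBoundedUnder (· ≥ ·) l u := hu.isBoundedUnder_ge
  have hu₂ : IsBoundedUnder (· ≤ ·) l u := hu.isBoundedUnder_le
  apply le_antisymm
  · simpa [hu.limsup_eq] using liminf_add_le hu₁ hu₂ hv hv'
  · simpa [hu.liminf_eq] using le_liminf_add hu₁ hu₂ hv hv'

lemma abs_sum_range_div_le {c : ℕ → ℝ} {M : ℝ} (h : ∀ j, |c j| ≤ M) (n : ℕ) :
    |(∑ j ∈ Finset.range n, c j) / n| ≤ M := by
  rcases Nat.eq_zero_or_pos n with rfl | hn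
  · simpa using (abs_nonneg _).trans (h 0)
  · rw [abs_div, Nat.abs_cast, div_le_iff₀ (by exact_mod_cast hn)]
    simpa [mul_comm] using (Finset.abs_sum_le_sum_abs _ _).trans
      (Finset.sum_le_sum fun j (_ : j ∈ Finset.range n) => h j)

lemma abs_liminf_le {c : ℕ → ℝ} {M : ℝ} (h : ∀ n, |c n| ≤ M) : |liminf c atTop| ≤ M := by
  have hlo : ∀ n, -M ≤ c n := fun n => (abs_le.1 (h n)).1
  have hhi : ∀ n, c n ≤ M := fun n => (abs_le.1 (h n)).2
  rw [abs_le]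
  exact ⟨le_liminf_of_le (isCoboundedUnder_ge_of_le atTop hhi) (Eventually.of_forall hlo),
    liminf_le_of_le (isBoundedUnder_of ⟨-M, hlo⟩) fun b hb =>
      (hb.and (Eventually.of_forall hhi)).exists.elim fun n hn => hn.1.trans hn.2⟩

lemma liminf_cesaro_comp_add {c : ℕ → ℝ} {M : ℝ} (h : ∀ j, |c j| ≤ M) (m : ℕ) :
    liminf (fun n : ℕ => (∑ j ∈ Finset.range n, c (m + j)) / n) atTop =
      liminf (fun n : ℕ => (∑ j ∈ Finset.range n, c j) / n) atTop := by
  set avg : ℕ → ℝ := fun n => (∑ j ∈ Finset.range n, c j) / n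
  set err : ℕ → ℝ := fun n => (∑ j ∈ Finset.range m, (c (n + j) - c j)) / n
  have hdiff : ∀ n : ℕ, (∑ j ∈ Finset.range n, c (m + j)) / n = err n + avg n := by
    intro n
    have h₁ := Finset.sum_range_add c m n
    have h₂ := Finset.sum_range_add c n m
    rw [Nat.add_comm m n] at h₁
    simp only [err, avg, Finset.sum_sub_distrib, ← add_div]
    congr 1
    linarith
  have herr : Tendsto err atTop (𝓝 0) := by
    refine squeeze_zero_norm (fun n => ?_) (tendsto_const_div_atTop_nhds_zero_nat (m * (2 * M)))
    rw [Real.norm_eq_abs, abs_div, Nat.abs_cast]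
    refine div_le_div_of_nonneg_right ?_ n.cast_nonneg
    refine (Finset.abs_sum_le_sum_abs _ _).trans ?_
    simpa using Finset.sum_le_sum fun j (_ : j ∈ Finset.range m) =>
      (abs_sub _ _).trans (add_le_add (h (n + j)) (h j)) |>.trans_eq (two_mul M).symm
  have havg : ∀ n, |avg n| ≤ M := abs_sum_range_div_le h
  calc _ = liminf (err + avg) atTop := by simp only [hdiff]; rfl
    _ = liminf avg atTop := liminf_add_of_tendsto_zero herr
        (isBoundedUnder_of ⟨-M, fun n => (abs_le.1 (havg n)).1⟩)
        (isCoboundedUnder_ge_of_le atTop fun n => (abs_le.1 (havg n)).2)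

noncomputable section

instance : IsProbabilityMeasure uHaar := by
  constructor
  rw [uHaar, Measure.smul_apply, smul_eq_mul, ENNReal.inv_mul_cancel]
  · exact (isOpen_univ.measure_pos (Measure.addHaar (G := USpace)) Set.univ_nonempty).ne'
  · exact measure_ne_top _ _

instance : uHaar.IsAddHaarMeasure := by
  rw [uHaar]
  refine Measure.IsAddHaarMeasure.smul _ ?_ ?_
  · simp only [ne_eq, ENNReal.inv_eq_zero]; exact measure_ne_top _ _
  · simp only [ne_eq, ENNReal.inv_eq_top]
    exact (isOpen_univ.measure_pos (Measure.addHaar (G := USpace)) Set.univ_nonempty).ne'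

def shiftU (m : ℕ) : USpace →+ USpace where
  toFun u j := u (m + j)
  map_zero' := rfl
  map_add' _ _ := rfl

lemma continuous_shiftU (m : ℕ) : Continuous (shiftU m) :=
  continuous_pi fun j => continuous_apply (m + j)

lemma surjective_shiftU (m : ℕ) : Function.Surjective (shiftU m) :=
  fun v => ⟨fun j => v (j - m), funext fun j => by simp [shiftU]⟩

lemma map_shiftU_uHaar (m : ℕ) : Measure.map (shiftU m) uHaar = uHaar := by
  have : (Measure.map (shiftU m) uHaar).IsAddHaarMeasure :=
    Measure.isAddHaarMeasure_map_of_isFiniteMeasure uHaar _ (continuous_shiftU m)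
      (surjective_shiftU m)
  have : IsProbabilityMeasure (Measure.map (shiftU m) uHaar) :=
    Measure.isProbabilityMeasure_map (continuous_shiftU m).measurable.aemeasurable
  exact Measure.isAddHaarMeasure_eq_of_isProbabilityMeasure _ _

lemma integral_comp_shiftU {f : USpace → ℝ} (hf : AEStronglyMeasurable f uHaar) (m : ℕ) :
    ∫ u, f (shiftU m u) ∂uHaar = ∫ u, f u ∂uHaar := by
  rw [← map_shiftU_uHaar m] at hf
  rw [← integral_map (continuous_shiftU m).measurable.aemeasurable hf, map_shiftU_uHaar]

lemma coordReal_mem_Ico (u : USpace) (n : ℕ) : coordReal u n ∈ Set.Ico (0 : ℝ) 1 := by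
  simpa [coordReal] using (AddCircle.equivIco 1 0 (u n)).2

lemma coordReal_shiftU (m : ℕ) (u : USpace) (k : ℕ) :
    coordReal (shiftU m u) k = coordReal u (m + k) := rfl

lemma measurable_coordReal (n : ℕ) : Measurable fun u => coordReal u n :=
  (measurable_subtype_coe.comp (AddCircle.measurableEquivIco 1 0).measurable).comp
    (measurable_pi_apply n)

namespace ConcurrentGame

lemma pick_eq_of_forall_ne {P A : Type} [Fintype P] [Fintype A] [Nonempty A] [DecidableEq P]
    {f : (P → A) → ℝ} {a : P → A} (ha : f a = 1)
    (hb : ∀ b, b ≠ a → f b = 0) {u : ℝ} (hu : u ∈ Set.Ico (0 : ℝ) 1) : pick f u = a := by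
  classical
  have hf : f = fun b => if b = a then 1 else 0 :=
    funext fun b => by split_ifs with h <;> [exact h ▸ ha; exact hb b h]
  have hcum : ∀ k, cum f k = if (Fintype.equivFin (P → A) a : ℕ) < k then 1 else 0 := by
    intro k
    simp [cum, hf, Finset.sum_ite_eq']
  have hcard : (Finset.univ.filter fun k : Fin (Fintype.card (P → A)) =>
      cum f (k + 1) ≤ u).card = Fintype.equivFin (P → A) a := by
    have hfilter : (Finset.univ.filter fun k : Fin (Fintype.card (P → A)) => cum f (k + 1) ≤ u) =
        Finset.univ.filter fun k : Fin _ => (k : ℕ) < Fintype.equivFin (P → A) a := by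
      ext k
      simp only [Finset.mem_filter, Finset.mem_univ, true_and, hcum]
      split_ifs with h
      · exact ⟨fun h' => absurd h' (not_le.2 hu.2), fun h' => by omega⟩
      · exact ⟨fun _ => by omega, fun _ => hu.1⟩
    rw [hfilter, Fin.card_filter_val_lt, min_eq_right (Fintype.equivFin (P → A) a).isLt.le]
  rw [pick, Equiv.symm_apply_eq, dif_pos (hcard ▸ (Fintype.equivFin (P → A) a).isLt)]
  exact Fin.ext hcard

lemma measurableSet_preimage_pick {P A : Type} [Fintype P] [Fintype A] [Nonempty A]
    [DecidableEq P] (f : (P → A) → ℝ) (T : Set (P → A)) : MeasurableSet (pick f ⁻¹' T) := by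
  classical
  have hcount : Measurable fun x : ℝ => (Finset.univ.filter fun k : Fin (Fintype.card (P → A)) =>
      cum f (k + 1) ≤ x).card := by
    simp only [Finset.card_filter]
    exact Finset.measurable_sum _ fun k _ =>
      Measurable.ite measurableSet_Ici measurable_const measurable_const
  exact hcount (MeasurableSet.of_discrete (s := {c | (Fintype.equivFin (P → A)).symm
    (if h : c < Fintype.card (P → A) then ⟨c, h⟩ else ⟨0, Fintype.card_pos⟩) ∈ T}))

section

variable {P S A : Type} [Fintype P] [Nonempty P] [Fintype S] [Nonempty S]
  [Fintype A] [Nonempty A] {G : ConcurrentGame P S A}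

lemma Strategy.prob_eq_zero_of_prob_eq_one {i : P} (σi : G.Strategy i) {x : Hist P S A} {s : S}
    {a b : A} (ha : σi.prob x s a = 1) (hb : b ≠ a) : σi.prob x s b = 0 := by
  classical
  have hsum := Finset.add_sum_erase Finset.univ (σi.prob x s) (Finset.mem_univ a)
  rw [σi.sum_one, ha, add_eq_left] at hsum
  exact (Finset.sum_eq_zero_iff_of_nonneg fun c _ => σi.nonneg x s c).1 hsum b
    (Finset.mem_erase.2 ⟨hb, Finset.mem_univ b⟩)

lemma histOf_append (s₀ : S) (L L' : List (P → A)) :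
    G.histOf s₀ (L ++ L') =
      ((G.histOf s₀ L).1 ++ (G.histOf (G.histOf s₀ L).2 L').1,
        (G.histOf (G.histOf s₀ L).2 L').2) := by
  induction L generalizing s₀ with
  | nil => simp [histOf]
  | cons a l ih => simp [histOf, ih]

lemma length_histOf_fst (s₀ : S) (L : List (P → A)) : (G.histOf s₀ L).1.length = L.length := by
  induction L generalizing s₀ with
  | nil => simp [histOf]
  | cons a l ih => simp [histOf, ih]

-- An arbitrary action where `σi` is not deterministic at `(x, s)`.
def Strategy.pureMove {i : P} (σi : G.Strategy i) (x : Hist P S A) (s : S) : A :=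
  Classical.epsilon fun a => σi.prob x s a = 1

lemma Strategy.prob_pureMove {i : P} {σi : G.Strategy i} (h : σi.IsPure) (x : Hist P S A)
    (s : S) : σi.prob x s (σi.pureMove x s) = 1 :=
  Classical.epsilon_spec (h x s)

def pureMove (ρ : Profile G) (x : Hist P S A) (s : S) : P → A := fun j => (ρ j).pureMove x s

def purePlay (ρ : Profile G) (s₀ : S) : ℕ → List (P → A)
  | 0 => []
  | n + 1 => purePlay ρ s₀ n ++
      [pureMove ρ (G.histOf s₀ (purePlay ρ s₀ n)).1 (G.histOf s₀ (purePlay ρ s₀ n)).2]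

def purePos (ρ : Profile G) (s₀ : S) (n : ℕ) : Hist P S A × S :=
  G.histOf s₀ (purePlay ρ s₀ n)

lemma purePlay_succ (ρ : Profile G) (s₀ : S) (n : ℕ) :
    purePlay ρ s₀ (n + 1) =
      purePlay ρ s₀ n ++ [pureMove ρ (purePos ρ s₀ n).1 (purePos ρ s₀ n).2] := rfl

lemma purePos_succ_snd (ρ : Profile G) (s₀ : S) (n : ℕ) :
    (purePos ρ s₀ (n + 1)).2 =
      G.tr (purePos ρ s₀ n).2 (pureMove ρ (purePos ρ s₀ n).1 (purePos ρ s₀ n).2) := by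
  rw [purePos, purePlay_succ, histOf_append]
  rfl

lemma length_purePlay (ρ : Profile G) (s₀ : S) (n : ℕ) : (purePlay ρ s₀ n).length = n := by
  induction n with
  | zero => rfl
  | succ n ih => simp [purePlay_succ, ih]

lemma length_purePos_fst (ρ : Profile G) (s₀ : S) (n : ℕ) : (purePos ρ s₀ n).1.length = n := by
  rw [purePos, length_histOf_fst, length_purePlay]

def rewBound (G : ConcurrentGame P S A) (i : P) : ℝ := ∑ s, |G.rew i s|

lemma abs_rew_le_rewBound (i : P) (s : S) : |G.rew i s| ≤ G.rewBound i :=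
  Finset.single_le_sum (fun s' _ => abs_nonneg (G.rew i s')) (Finset.mem_univ s)

lemma abs_payOf_le_rewBound (i : P) (ss : ℕ → S) : |G.payOf i ss| ≤ G.rewBound i :=
  abs_liminf_le (abs_sum_range_div_le fun j => abs_rew_le_rewBound i (ss j))

lemma payOf_comp_add (i : P) (ss : ℕ → S) (m : ℕ) :
    G.payOf i (fun n => ss (m + n)) = G.payOf i ss :=
  liminf_cesaro_comp_add (fun j => abs_rew_le_rewBound i (ss j)) m

def Strategy.after {i : P} (σi : G.Strategy i) (H : Hist P S A) : G.Strategy i where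
  prob y := σi.prob (H ++ y)
  nonneg y := σi.nonneg (H ++ y)
  sum_one y := σi.sum_one (H ++ y)
  supp y := σi.supp (H ++ y)

lemma isPureProfile_after {ρ : Profile G} (hρ : IsPureProfile ρ) (H : Hist P S A) :
    IsPureProfile fun j => (ρ j).after H :=
  fun j y => hρ j (H ++ y)

open Classical in
def Strategy.splice {i : P} (σi τ : G.Strategy i) (H : Hist P S A) : G.Strategy i where
  prob x := if H <+: x then τ.prob (x.drop H.length) else σi.prob x
  nonneg x := by split_ifs; exacts [τ.nonneg _, σi.nonneg x]
  sum_one x := by split_ifs; exacts [τ.sum_one _, σi.sum_one x]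
  supp x := by split_ifs; exacts [τ.supp _, σi.supp x]

lemma Strategy.splice_prob_append {i : P} (σi τ : G.Strategy i) (H y : Hist P S A) :
    (σi.splice τ H).prob (H ++ y) = τ.prob y := by
  simp [splice]

lemma Strategy.splice_prob_of_length_lt {i : P} (σi τ : G.Strategy i) {H x : Hist P S A}
    (hx : x.length < H.length) : (σi.splice τ H).prob x = σi.prob x := by
  have : ¬ H <+: x := fun h => absurd h.length_le (not_le.2 hx)
  simp [splice, this]

open Classical in
def Strategy.deviate {i : P} (σi : G.Strategy i) (x₀ : Hist P S A) (b : A) : G.Strategy i where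
  prob x s := if x = x₀ ∧ b ∈ G.act i s then Pi.single b 1 else σi.prob x s
  nonneg x s a := by
    split_ifs
    · by_cases hab : a = b <;> simp [hab]
    · exact σi.nonneg x s a
  sum_one x s := by split_ifs <;> simp [σi.sum_one]
  supp x s a := by
    split_ifs with h
    · intro ha
      rw [show a = b by by_contra hab; simp [hab] at ha]
      exact h.2
    · exact σi.supp x s a

lemma Strategy.deviate_prob_self {i : P} (σi : G.Strategy i) (x₀ : Hist P S A) {b : A} {s : S}
    (hb : b ∈ G.act i s) : (σi.deviate x₀ b).prob x₀ s b = 1 := by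
  simp [deviate, hb]

lemma Strategy.deviate_prob_of_ne {i : P} (σi : G.Strategy i) {x₀ x : Hist P S A} (b : A)
    (hx : x ≠ x₀) : (σi.deviate x₀ b).prob x = σi.prob x := by
  funext s
  simp [deviate, hx]

variable [DecidableEq P]

lemma pick_weight_of_forall_prob {ρ : Profile G} {x : Hist P S A} {s : S} {a : P → A}
    (h : ∀ j, (ρ j).prob x s (a j) = 1) {u : ℝ} (hu : u ∈ Set.Ico (0 : ℝ) 1) :
    pick (G.weight ρ x s) u = a := by
  refine pick_eq_of_forall_ne (show G.weight ρ x s a = 1 from Finset.prod_eq_one fun j _ => h j)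
    (fun b hb => ?_) hu
  obtain ⟨j, hj⟩ := Function.ne_iff.1 hb
  exact Finset.prod_eq_zero (Finset.mem_univ j) ((ρ j).prob_eq_zero_of_prob_eq_one (h j) hj)

lemma samplePrefix_succ (ρ : Profile G) (s₀ : S) (u : USpace) (n : ℕ) :
    G.samplePrefix ρ s₀ u (n + 1) = G.samplePrefix ρ s₀ u n ++
      [pick (G.weight ρ (G.histOf s₀ (G.samplePrefix ρ s₀ u n)).1
        (G.histOf s₀ (G.samplePrefix ρ s₀ u n)).2) (coordReal u n)] := rfl

lemma samplePrefix_succ_of_forall_prob {ρ : Profile G} {s₀ : S} {u : USpace} {n : ℕ}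
    {a : P → A} (h : ∀ j, (ρ j).prob (G.histOf s₀ (G.samplePrefix ρ s₀ u n)).1
      (G.histOf s₀ (G.samplePrefix ρ s₀ u n)).2 (a j) = 1) :
    G.samplePrefix ρ s₀ u (n + 1) = G.samplePrefix ρ s₀ u n ++ [a] := by
  rw [samplePrefix_succ, pick_weight_of_forall_prob h (coordReal_mem_Ico u n)]

lemma samplePrefix_eq_purePlay {ρ σ : Profile G} (hσ : IsPureProfile σ) {s₀ : S} {n : ℕ}
    (h : ∀ k < n, ∀ j, (ρ j).prob (purePos σ s₀ k).1 = (σ j).prob (purePos σ s₀ k).1)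
    (u : USpace) : G.samplePrefix ρ s₀ u n = purePlay σ s₀ n := by
  induction n with
  | zero => rfl
  | succ n ih =>
    have ih := ih fun k hk => h k (by omega)
    rw [samplePrefix_succ_of_forall_prob, ih, purePlay_succ]
    intro j
    rw [ih, ← purePos, h n n.lt_succ_self]
    exact (σ j).prob_pureMove (hσ j) _ _

lemma samplePrefix_pure {ρ : Profile G} (hρ : IsPureProfile ρ) (s₀ : S) (u : USpace) (n : ℕ) :
    G.samplePrefix ρ s₀ u n = purePlay ρ s₀ n :=
  samplePrefix_eq_purePlay hρ (fun _ _ _ => rfl) u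

lemma expPay_pure {ρ : Profile G} (hρ : IsPureProfile ρ) (s₀ : S) (i : P) :
    G.expPay ρ s₀ i = G.payOf i fun n => (purePos ρ s₀ n).2 := by
  have hstate : ∀ u, G.stateAt ρ s₀ u = fun n => (purePos ρ s₀ n).2 := fun u =>
    funext fun n => by rw [stateAt, samplePrefix_pure hρ, purePos]
  simp [expPay, hstate]

lemma measurableSet_samplePrefix_mem (ρ : Profile G) (s₀ : S) (n : ℕ)
    (T : Set (List (P → A))) : MeasurableSet {u | G.samplePrefix ρ s₀ u n ∈ T} := by
  induction n generalizing T with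
  | zero => exact MeasurableSet.const ([] ∈ T)
  | succ n ih =>
    have hunion : {u | G.samplePrefix ρ s₀ u (n + 1) ∈ T} = ⋃ L : List (P → A),
        {u | G.samplePrefix ρ s₀ u n ∈ ({L} : Set _)} ∩ (fun u => coordReal u n) ⁻¹'
          (pick (G.weight ρ (G.histOf s₀ L).1 (G.histOf s₀ L).2) ⁻¹' {a | L ++ [a] ∈ T}) := by
      ext u
      simp [samplePrefix_succ]
    rw [hunion]
    exact MeasurableSet.iUnion fun L =>
      (ih {L}).inter (measurable_coordReal n (measurableSet_preimage_pick _ _))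

lemma measurable_payOf_stateAt (ρ : Profile G) (s₀ : S) (i : P) :
    Measurable fun u => G.payOf i (G.stateAt ρ s₀ u) := by
  have hrew : ∀ j, Measurable fun u => G.rew i (G.stateAt ρ s₀ u j) := fun j B _ =>
    measurableSet_samplePrefix_mem ρ s₀ j {L | G.rew i (G.histOf s₀ L).2 ∈ B}
  exact Measurable.liminf fun n => (Finset.measurable_sum _ fun j _ => hrew j).div_const _

lemma abs_expPay_le_rewBound (ρ : Profile G) (s₀ : S) (i : P) :
    |G.expPay ρ s₀ i| ≤ G.rewBound i := by
  simpa [expPay] using norm_integral_le_of_norm_le_const (μ := uHaar)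
    (f := fun u => G.payOf i (G.stateAt ρ s₀ u))
    (Eventually.of_forall fun u => abs_payOf_le_rewBound i _)

lemma samplePrefix_add_of_forced_prefix {ρ ρ' : Profile G} {s₀ t : S} {H : Hist P S A}
    {L : List (P → A)} (hL : G.histOf s₀ L = (H, t))
    (hpre : ∀ u, G.samplePrefix ρ s₀ u L.length = L)
    (hafter : ∀ j y, (ρ j).prob (H ++ y) = (ρ' j).prob y) (u : USpace) (k : ℕ) :
    G.samplePrefix ρ s₀ u (L.length + k) = L ++ G.samplePrefix ρ' t (shiftU L.length u) k := by
  induction k with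
  | zero => rw [Nat.add_zero, hpre u]; exact (List.append_nil L).symm
  | succ k ih =>
    have hweight : ∀ y s, G.weight ρ (H ++ y) s = G.weight ρ' y s := fun y s =>
      funext fun a => Finset.prod_congr rfl fun j _ => congrFun (congrFun (hafter j y) s) (a j)
    rw [← Nat.add_assoc, samplePrefix_succ, ih, samplePrefix_succ, histOf_append, hL,
      hweight, List.append_assoc, coordReal_shiftU]

lemma expPay_eq_of_forced_prefix {ρ ρ' : Profile G} {s₀ t : S} {H : Hist P S A}
    {L : List (P → A)} (hL : G.histOf s₀ L = (H, t))
    (hpre : ∀ u, G.samplePrefix ρ s₀ u L.length = L)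
    (hafter : ∀ j y, (ρ j).prob (H ++ y) = (ρ' j).prob y) (i : P) :
    G.expPay ρ s₀ i = G.expPay ρ' t i := by
  have hstate : ∀ u k,
      G.stateAt ρ s₀ u (L.length + k) = G.stateAt ρ' t (shiftU L.length u) k := by
    intro u k
    rw [stateAt, stateAt, samplePrefix_add_of_forced_prefix hL hpre hafter, histOf_append, hL]
  calc G.expPay ρ s₀ i = ∫ u, G.payOf i (G.stateAt ρ' t (shiftU L.length u)) ∂uHaar :=
        integral_congr_ae <| Eventually.of_forall fun u =>
          (payOf_comp_add i _ L.length).symm.trans (congrArg _ (funext (hstate u)))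
    _ = G.expPay ρ' t i :=
        integral_comp_shiftU (measurable_payOf_stateAt ρ' t i).aestronglyMeasurable _

lemma pval_le_of_forall_expPay_le {σ : Profile G} (hσ : IsPureProfile σ) {i : P} {t : S}
    {C : ℝ} (h : ∀ τ, G.expPay (Function.update σ i τ) t i ≤ C) : G.pval i t ≤ C := by
  have hbdd : ∀ ρ : Profile G,
      BddAbove (Set.range fun τ : G.Strategy i => G.expPay (Function.update ρ i τ) t i) :=
    fun ρ => ⟨G.rewBound i, by
      rintro _ ⟨τ, rfl⟩
      exact (abs_le.1 (abs_expPay_le_rewBound _ _ _)).2⟩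
  refine (ciInf_le ⟨-G.rewBound i, ?_⟩ (⟨σ, hσ⟩ : {σ : Profile G // IsPureProfile σ})).trans ?_
  · rintro _ ⟨ρ, rfl⟩
    exact le_ciSup_of_le (hbdd ρ.1) (ρ.1 i) (abs_le.1 (abs_expPay_le_rewBound _ _ _)).1
  · have : Nonempty (G.Strategy i) := ⟨σ i⟩
    exact ciSup_le h

lemma samplePrefix_update_of_deviation {σ : Profile G} (hσ : IsPureProfile σ) {s₀ : S} {i : P}
    {n : ℕ} {b : A} {τ : G.Strategy i}
    (hbefore : ∀ k < n, τ.prob (purePos σ s₀ k).1 = (σ i).prob (purePos σ s₀ k).1)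
    (hat : τ.prob (purePos σ s₀ n).1 (purePos σ s₀ n).2 b = 1) (u : USpace) :
    G.samplePrefix (Function.update σ i τ) s₀ u (n + 1) = purePlay σ s₀ n ++
      [Function.update (pureMove σ (purePos σ s₀ n).1 (purePos σ s₀ n).2) i b] := by
  have hprefix : G.samplePrefix (Function.update σ i τ) s₀ u n = purePlay σ s₀ n := by
    refine samplePrefix_eq_purePlay hσ (fun k hk j => ?_) u
    rcases eq_or_ne j i with rfl | hj
    · rw [Function.update_self, hbefore k hk]
    · rw [Function.update_of_ne hj]
  rw [samplePrefix_succ_of_forall_prob, hprefix]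
  intro j
  rw [hprefix, ← purePos]
  rcases eq_or_ne j i with rfl | hj
  · simpa using hat
  · rw [Function.update_of_ne hj, Function.update_of_ne hj]
    exact (σ j).prob_pureMove (hσ j) _ _

lemma pval_le_expPay_of_deviation {σ : Profile G} (hσ : IsPureProfile σ) {s₀ : S}
    (hnash : G.IsNash σ s₀) (i : P) (n : ℕ) {b : A} (hb : b ∈ G.act i (purePos σ s₀ n).2) :
    G.pval i (G.tr (purePos σ s₀ n).2
      (Function.update (pureMove σ (purePos σ s₀ n).1 (purePos σ s₀ n).2) i b)) ≤
      G.expPay σ s₀ i := by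
  set x := (purePos σ s₀ n).1
  set c := Function.update (pureMove σ x (purePos σ s₀ n).2) i b
  set H : Hist P S A := x ++ [((purePos σ s₀ n).2, c)]
  refine pval_le_of_forall_expPay_le (isPureProfile_after hσ H) fun τ => ?_
  set τ' := ((σ i).deviate x b).splice τ H
  have hlen : ∀ k ≤ n, (purePos σ s₀ k).1.length < H.length := fun k hk => by
    simp [H, x, length_purePos_fst, Nat.lt_succ_of_le hk]
  have hpre : ∀ u, G.samplePrefix (Function.update σ i τ') s₀ u
      (purePlay σ s₀ n ++ [c]).length = purePlay σ s₀ n ++ [c] := by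
    intro u
    rw [List.length_append, length_purePlay, List.length_singleton]
    refine samplePrefix_update_of_deviation hσ (fun k hk => ?_) ?_ u
    · rw [Strategy.splice_prob_of_length_lt _ _ (hlen k hk.le),
        Strategy.deviate_prob_of_ne]
      exact fun h => hk.ne (by simpa [x, length_purePos_fst] using congrArg List.length h)
    · rw [Strategy.splice_prob_of_length_lt _ _ (hlen n le_rfl),
        Strategy.deviate_prob_self _ _ hb]
  have hL : G.histOf s₀ (purePlay σ s₀ n ++ [c]) = (H, G.tr (purePos σ s₀ n).2 c) := by
    rw [histOf_append]
    rfl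
  have hafter : ∀ j y, (Function.update σ i τ' j).prob (H ++ y) =
      (Function.update (fun j => (σ j).after H) i τ j).prob y := by
    intro j y
    rcases eq_or_ne j i with rfl | hj
    · simp only [Function.update_self, τ', Strategy.splice_prob_append]
    · simp only [Function.update_of_ne hj]
      rfl
  calc _ = G.expPay (Function.update σ i τ') s₀ i :=
        (expPay_eq_of_forced_prefix hL hpre hafter i).symm
    _ ≤ G.expPay σ s₀ i := hnash i τ'

lemma zSecure_pureMove {σ : Profile G} (hσ : IsPureProfile σ) {s₀ : S} (hnash : G.IsNash σ s₀)
    (n : ℕ) : G.zSecure (fun i => (G.expPay σ s₀ i : EReal)) (purePos σ s₀ n).2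
      (pureMove σ (purePos σ s₀ n).1 (purePos σ s₀ n).2) :=
  ⟨fun j => (σ j).supp _ _ _ (((σ j).prob_pureMove (hσ j) _ _).symm ▸ one_ne_zero),
    fun i _ hb => EReal.coe_le_coe_iff.2 (pval_le_expPay_of_deviation hσ hnash i n hb)⟩

end

end ConcurrentGame

end

/-- Let `σ` be a pure Nash equilibrium of `(G, s₀)` with payoff vector `z`.  Then there is an
infinite path `π` in the graph `G(z)` from `s₀` with `pay_i(π) = z i` for each player `i`. -/
theorem secure_path_of_pure_nash {P S A : Type} [Fintype P] [Nonempty P] [Fintype S]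
    [Nonempty S] [Fintype A] [Nonempty A] [DecidableEq P]
    (G : ConcurrentGame P S A) (s₀ : S) (σ : Profile G) (z : P → ℝ)
    (hpure : ConcurrentGame.IsPureProfile σ) (hnash : G.IsNash σ s₀)
    (hz : ∀ i, G.expPay σ s₀ i = z i) :
    ∃ π : ℕ → S, π 0 = s₀ ∧
      (∀ n, G.secureEdge (fun i => (z i : EReal)) (π n) (π (n + 1))) ∧
      ∀ i, G.payOf i π = z i := by
  simp only [← hz]
  exact ⟨fun n => (ConcurrentGame.purePos σ s₀ n).2, rfl,
    fun n => ⟨_, ConcurrentGame.zSecure_pureMove hpure hnash n,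
      (ConcurrentGame.purePos_succ_snd σ s₀ n).symm⟩,
    fun i => (ConcurrentGame.expPay_pure hpure s₀ i).symm⟩
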